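/- (Abstract Aubin–Nitsche duality) Let $V$ be a real inner product space with an additional norm $\|\cdot\|_h$, $a: V \times V \to \mathbb{R}$ bilinear with $|a(w,z)| \le \|w\|_h \|z\|_h$. Suppose $e \in V$, and for the dual solution $w \in V$ one has $a(e, w) = \langle e, e\rangle$ and $a(e, w_h) = 0$ for all $w_h$ in a subspace $V_h$. If $\|e\|_h \le C h^\delta A$ and $\inf_{w_h \in V_h}\|w - w_h\|_h \le C h^\delta \sqrt{\langle e,e\rangle}$, then $\sqrt{\langle e, e\rangle} \le C^2 h^{2\delta} A$. -/

import Mathlib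

/-!
Galerkin orthogonality lets one replace `w` by `w - w_h` in `⟨e, e⟩ = a(e, w)`, so continuity of
`a` gives `‖e‖² ≤ ‖e‖_h ‖w - w_h‖_h` for every `w_h ∈ V_h`, hence `‖e‖² ≤ ‖e‖_h · inf ‖w - w_h‖_h`.
The two approximation bounds turn this into `‖e‖² ≤ C² h^{2δ} A ‖e‖`; divide by `‖e‖`.
-/

open scoped RealInnerProductSpace Pointwise

lemma apply_le_mul_apply_sub_of_forall_mem_eq_zero {R V : Type*} [CommRing R] [LinearOrder R]
    [AddCommGroup V] [Module R V] (a : V →ₗ[R] V →ₗ[R] R) (N : V → R)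
    (hcont : ∀ w z : V, |a w z| ≤ N w * N z) {W : Submodule R V} {e : V}
    (horth : ∀ wh ∈ W, a e wh = 0) (w : V) {wh : V} (hwh : wh ∈ W) :
    a e w ≤ N e * N (w - wh) :=
  calc a e w = a e (w - wh) := by rw [map_sub, horth wh hwh, sub_zero]
    _ ≤ |a e (w - wh)| := le_abs_self _
    _ ≤ N e * N (w - wh) := hcont _ _

lemma Real.le_mul_sInf_of_forall_le_mul {s : Set ℝ} {b c : ℝ} (hb : 0 ≤ b) (hs : s.Nonempty)
    (h : ∀ r ∈ s, c ≤ b * r) : c ≤ b * sInf s := by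
  rw [← smul_eq_mul, ← Real.sInf_smul_of_nonneg hb]
  exact le_csInf (hs.smul_set) (by rintro _ ⟨r, hr, rfl⟩; exact h r hr)

lemma le_of_sq_le_mul_of_nonneg {R : Type*} [CommRing R] [LinearOrder R] [IsStrictOrderedRing R]
    {s K : R} (hK : 0 ≤ K) (h : s ^ 2 ≤ K * s) : s ≤ K := by
  nlinarith

theorem aubin_nitsche_abstract_general
    {V : Type*} [NormedAddCommGroup V] [InnerProductSpace ℝ V]
    (Nh : V → ℝ) (hNh : ∀ v, 0 ≤ Nh v)
    (a : V →ₗ[ℝ] V →ₗ[ℝ] ℝ)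
    (hcont : ∀ w z : V, |a w z| ≤ Nh w * Nh z)
    (Vh : Submodule ℝ V) (e w : V) (C h δ A : ℝ)
    (hh : 0 < h) (hA : 0 ≤ A)
    (hdual : a e w = ⟪e, e⟫)
    (horth : ∀ wh ∈ Vh, a e wh = 0)
    (he : Nh e ≤ C * h ^ δ * A)
    (happrox : sInf {r : ℝ | ∃ wh ∈ Vh, r = Nh (w - wh)}
        ≤ C * h ^ δ * Real.sqrt ⟪e, e⟫) :
    Real.sqrt ⟪e, e⟫ ≤ C ^ 2 * h ^ (2 * δ) * A := by
  rw [real_inner_self_eq_norm_sq] at hdual ⊢ happrox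
  rw [Real.sqrt_sq (norm_nonneg e)] at happrox ⊢
  set S : Set ℝ := {r : ℝ | ∃ wh ∈ Vh, r = Nh (w - wh)}
  have hgalerkin : ∀ r ∈ S, ‖e‖ ^ 2 ≤ Nh e * r := by
    rintro _ ⟨wh, hwh, rfl⟩
    exact hdual ▸ apply_le_mul_apply_sub_of_forall_mem_eq_zero a Nh hcont horth w hwh
  have hS_nonneg : 0 ≤ sInf S := Real.sInf_nonneg (by rintro _ ⟨wh, -, rfl⟩; exact hNh _)
  refine le_of_sq_le_mul_of_nonneg (by positivity) ?_
  calc ‖e‖ ^ 2 ≤ Nh e * sInf S :=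
        Real.le_mul_sInf_of_forall_le_mul (hNh e) ⟨_, 0, Vh.zero_mem, rfl⟩ hgalerkin
    _ ≤ (C * h ^ δ * A) * (C * h ^ δ * ‖e‖) :=
        mul_le_mul he happrox hS_nonneg ((hNh e).trans he)
    _ = C ^ 2 * h ^ (2 * δ) * A * ‖e‖ := by rw [two_mul, Real.rpow_add hh]; ring

/-- abstract Aubin–Nitsche duality argument. Let `e = u - u_h` be the
error, `w` the dual solution with `a(e,w) = ⟨e,e⟩` and `a(e,w_h) = 0` for `w_h ∈ V_h`.
If `a` is continuous with respect to the discrete norm `Nh`, `Nh e ≤ C h^δ A`, and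
the best approximation of `w` in `V_h` satisfies
`inf_{w_h ∈ V_h} Nh (w - w_h) ≤ C h^δ √⟨e,e⟩`, then `√⟨e,e⟩ ≤ C² h^{2δ} A`. -/
theorem aubin_nitsche_abstract
    {V : Type*} [NormedAddCommGroup V] [InnerProductSpace ℝ V]
    (Nh : V → ℝ) (hNh : ∀ v, 0 ≤ Nh v)
    (a : V →ₗ[ℝ] V →ₗ[ℝ] ℝ)
    (hcont : ∀ w z : V, |a w z| ≤ Nh w * Nh z)
    (Vh : Submodule ℝ V) (e w : V) (C h δ A : ℝ)
    (hC : 0 ≤ C) (hh : 0 < h) (hA : 0 ≤ A)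
    (hdual : a e w = ⟪e, e⟫)
    (horth : ∀ wh ∈ Vh, a e wh = 0)
    (he : Nh e ≤ C * h ^ δ * A)
    (happrox : sInf {r : ℝ | ∃ wh ∈ Vh, r = Nh (w - wh)}
        ≤ C * h ^ δ * Real.sqrt ⟪e, e⟫) :
    Real.sqrt ⟪e, e⟫ ≤ C ^ 2 * h ^ (2 * δ) * A :=
  aubin_nitsche_abstract_general Nh hNh a hcont Vh e w C h δ A hh hA hdual horth he happrox
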